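/- arXiv:2312.03944 — 2 statements merged into one kernel-verified Lean document; each statement's English description precedes it below -/
import Mathlib

section
/- Let g be a real polynomial. Then the following are equivalent: (a) there exist an integer d ≥ deg(g) and real numbers α_0, α_1, …, α_d with α_0 = 0, α_d = 1 and α_{k−1} ≤ α_k for all 1 ≤ k ≤ d (so the coefficients are nondecreasing and lie in [0,1]), such that g(x) = Σ_{k=0}^d α_k · b_{k,d}(x); (b) g(0) = 0, g(1) = 1, and both 0 < g(x) < 1 and g'(x) > 0 hold for all x ∈ (0,1). -/
/-!
For (a) ⇒ (b): the derivative of `∑ αₖ b_{k,d}` is `d ∑ (αₖ₊₁ - αₖ) b_{k,d-1}`, a nonnegative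
combination of polynomials that are positive on `(0,1)`, whose increments telescope to
`α_d - α_0 = 1`; so `g` is strictly increasing on `[0,1]`, from `0` to `1`.

For (b) ⇒ (a): write `g' = x^a (1-x)^b q` with `q > 0` on `[0,1]`. By Bernstein's theorem `q` has
positive Bernstein coefficients in every large degree `n`, since the coefficient of `b_{k,n}` is
`q(k/n) + O(1/n)`. Multiplication by `x` and by `1 - x` preserves nonnegative Bernstein forms (by
degree elevation), so `g' = ∑ eₖ b_{k,N}` with `eₖ ≥ 0`, and integrating term by term gives
`g = ∑ αₖ b_{k,N+1}` with `αₖ = ∑_{i<k} eᵢ / (N+1)`.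
-/

open Polynomial Finset

section CommRing

variable {R : Type*} [CommRing R]

noncomputable def bernsteinSum (n : ℕ) (α : ℕ → R) : R[X] :=
  ∑ k ∈ range (n + 1), C (α k) * bernsteinPolynomial R n k

lemma natDegree_bernsteinPolynomial_le (n k : ℕ) : (bernsteinPolynomial R n k).natDegree ≤ n := by
  rcases le_or_gt k n with hk | hk
  · unfold bernsteinPolynomial
    compute_degree
    omega
  · simp [bernsteinPolynomial.eq_zero_of_lt R hk]

lemma natDegree_bernsteinSum_le (n : ℕ) (α : ℕ → R) : (bernsteinSum n α).natDegree ≤ n :=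
  natDegree_sum_le_of_forall_le _ _ fun k _ =>
    natDegree_C_mul_le _ _ |>.trans (natDegree_bernsteinPolynomial_le n k)

@[simp]
lemma eval_zero_bernsteinSum (n : ℕ) (α : ℕ → R) : (bernsteinSum n α).eval 0 = α 0 := by
  simp [bernsteinSum, eval_finsetSum, bernsteinPolynomial.eval_at_0]

@[simp]
lemma eval_one_bernsteinSum (n : ℕ) (α : ℕ → R) : (bernsteinSum n α).eval 1 = α n := by
  simp [bernsteinSum, eval_finsetSum, bernsteinPolynomial.eval_at_1]

lemma derivative_bernsteinSum (n : ℕ) (α : ℕ → R) :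
    derivative (bernsteinSum (n + 1) α) = bernsteinSum n fun k => (n + 1) * (α (k + 1) - α k) := by
  set S : ℕ → R[X] := fun k => C (α k) * bernsteinPolynomial R n k
  have hshift : ∑ k ∈ range (n + 1), S (k + 1) + S 0 = ∑ k ∈ range (n + 1), S k := by
    rw [← sum_range_succ', sum_range_succ, add_eq_left]
    simp [S, bernsteinPolynomial.eq_zero_of_lt R n.lt_succ_self]
  rw [bernsteinSum, derivative_sum, sum_range_succ']
  simp only [derivative_C_mul, bernsteinPolynomial.derivative_succ_aux,
    bernsteinPolynomial.derivative_zero, Nat.add_sub_cancel, bernsteinSum, map_mul, map_sub,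
    mul_sub, sub_mul, sum_sub_distrib]
  simp only [S] at hshift
  simp only [mul_left_comm (C (α _)), mul_assoc, ← mul_sum, map_add, map_natCast, map_one,
    Nat.cast_succ]
  linear_combination (-(n : R[X]) - 1) * hshift

lemma X_mul_bernsteinPolynomial (n k : ℕ) :
    ((n + 1 : ℕ) : R[X]) * (X * bernsteinPolynomial R n k) =
      ((k + 1 : ℕ) : R[X]) * bernsteinPolynomial R (n + 1) (k + 1) := by
  have hchoose : ((n + 1 : ℕ) : R[X]) * (n.choose k : ℕ) =
      (k + 1 : ℕ) * ((n + 1).choose (k + 1) : ℕ) := by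
    rw [← Nat.cast_mul, ← Nat.cast_mul, Nat.add_one_mul_choose_eq, mul_comm]
  simp only [bernsteinPolynomial, Nat.add_sub_add_right]
  linear_combination (X ^ (k + 1) * (1 - X) ^ (n - k)) * hchoose

lemma one_sub_X_mul_bernsteinPolynomial (n k : ℕ) :
    ((n + 1 : ℕ) : R[X]) * ((1 - X) * bernsteinPolynomial R n k) =
      ((n + 1 - k : ℕ) : R[X]) * bernsteinPolynomial R (n + 1) k := by
  rcases le_or_gt k n with hk | hk
  · have hchoose : ((n + 1 : ℕ) : R[X]) * (n.choose k : ℕ) =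
        ((n + 1 - k : ℕ) : R[X]) * ((n + 1).choose k : ℕ) := by
      rw [← Nat.cast_mul, ← Nat.cast_mul, mul_comm, Nat.choose_mul_succ_eq, mul_comm]
    rw [Nat.sub_add_comm hk] at hchoose ⊢
    simp only [bernsteinPolynomial, Nat.sub_add_comm hk, pow_succ]
    linear_combination (X ^ k * (1 - X) ^ (n - k) * (1 - X)) * hchoose
  · simp [bernsteinPolynomial.eq_zero_of_lt R hk, Nat.sub_eq_zero_of_le hk]

lemma sum_descFactorial_mul_bernsteinPolynomial (n j : ℕ) :
    ∑ k ∈ range (n + 1), (k.descFactorial j : R[X]) * bernsteinPolynomial R n k =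
      (n.descFactorial j : R[X]) * X ^ j := by
  rcases lt_or_ge n j with hnj | hjn
  · rw [Nat.descFactorial_eq_zero_iff_lt.mpr hnj, Nat.cast_zero, zero_mul]
    refine sum_eq_zero fun k hk => ?_
    rw [Nat.descFactorial_eq_zero_iff_lt.mpr (by grind), Nat.cast_zero, zero_mul]
  obtain ⟨m, rfl⟩ := Nat.exists_eq_add_of_le hjn
  have hlow : ∑ k ∈ range j, (k.descFactorial j : R[X]) * bernsteinPolynomial R (j + m) k = 0 :=
    sum_eq_zero fun k hk => by
      rw [Nat.descFactorial_eq_zero_iff_lt.mpr (mem_range.mp hk), Nat.cast_zero, zero_mul]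
  have hterm : ∀ i, ((j + i).descFactorial j : R[X]) *
      bernsteinPolynomial R (j + m) (j + i) =
        ((j + m).descFactorial j : R[X]) * X ^ j * bernsteinPolynomial R m i := by
    intro i
    have hchoose : ((j + i).descFactorial j : R[X]) * ((j + m).choose (j + i) : ℕ) =
        ((j + m).descFactorial j : R[X]) * (m.choose i : ℕ) := by
      rw [← Nat.cast_mul, ← Nat.cast_mul]
      congr 1
      simp only [Nat.descFactorial_eq_factorial_mul_choose, mul_assoc, mul_comm ((j + i).choose j),
        Nat.choose_mul (Nat.le_add_right j i), Nat.add_sub_cancel_left]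
    simp only [bernsteinPolynomial, Nat.add_sub_add_left]
    linear_combination (X ^ (j + i) * (1 - X) ^ (m - i)) * hchoose
  rw [show j + m + 1 = j + (m + 1) by ring, sum_range_add, hlow, zero_add,
    sum_congr rfl fun i _ => hterm i, ← mul_sum, bernsteinPolynomial.sum, mul_one]

end CommRing

section Field

variable {K : Type*} [Field K] [CharZero K]

lemma X_mul_bernsteinSum (n : ℕ) (α : ℕ → K) :
    X * bernsteinSum n α = bernsteinSum (n + 1) fun k => k / (n + 1) * α (k - 1) := by
  have hn : ((n + 1 : ℕ) : K[X]) ≠ 0 := by exact_mod_cast n.succ_ne_zero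
  refine mul_left_cancel₀ hn ?_
  simp only [bernsteinSum, mul_sum, sum_range_succ' _ (n + 1), Nat.cast_zero, zero_div, zero_mul,
    map_zero, add_zero]
  refine sum_congr rfl fun k _ => ?_
  rw [mul_left_comm X, mul_left_comm, X_mul_bernsteinPolynomial, Nat.add_sub_cancel]
  simp only [← map_natCast (C : K →+* K[X]), ← mul_assoc, ← map_mul]
  congr 2
  field_simp
  push_cast
  ring

lemma one_sub_X_mul_bernsteinSum (n : ℕ) (α : ℕ → K) :
    (1 - X) * bernsteinSum n α =
      bernsteinSum (n + 1) fun k => ((n + 1 - k : ℕ) : K) / (n + 1) * α k := by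
  have hn : ((n + 1 : ℕ) : K[X]) ≠ 0 := by exact_mod_cast n.succ_ne_zero
  refine mul_left_cancel₀ hn ?_
  simp only [bernsteinSum, mul_sum, sum_range_succ _ (n + 1), Nat.sub_self, Nat.cast_zero,
    zero_div, zero_mul, map_zero, add_zero]
  refine sum_congr rfl fun k _ => ?_
  rw [mul_left_comm (1 - X), mul_left_comm, one_sub_X_mul_bernsteinPolynomial]
  simp only [← map_natCast (C : K →+* K[X]), ← mul_assoc, ← map_mul]
  congr 2
  field_simp
  push_cast
  ring

/-- The coefficients read off from `X ^ j = ∑ₖ (k.descFactorial j / n.descFactorial j) b_{k,n}`;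
they are the Bernstein coefficients of `q` only when `q.natDegree ≤ n` (otherwise some
`n.descFactorial j` vanishes). -/
noncomputable def bernsteinCoeff (q : K[X]) (n k : ℕ) : K :=
  ∑ j ∈ range (q.natDegree + 1), q.coeff j * (k.descFactorial j / n.descFactorial j)

lemma bernsteinSum_bernsteinCoeff {q : K[X]} {n : ℕ} (hq : q.natDegree ≤ n) :
    bernsteinSum n (bernsteinCoeff q n) = q := by
  conv_rhs => rw [as_sum_range_C_mul_X_pow q]
  simp only [bernsteinSum, bernsteinCoeff, map_sum, sum_mul]
  rw [sum_comm]
  refine sum_congr rfl fun j hj => ?_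
  have hdesc : (n.descFactorial j : K) ≠ 0 :=
    Nat.cast_ne_zero.mpr <| Nat.descFactorial_eq_zero_iff_lt.not.mpr (by grind)
  have hterm : ∀ k,
      C (q.coeff j * (k.descFactorial j / n.descFactorial j)) * bernsteinPolynomial K n k =
        C (q.coeff j / n.descFactorial j) *
          ((k.descFactorial j : K[X]) * bernsteinPolynomial K n k) := by
    intro k
    rw [← mul_assoc, ← map_natCast C, ← map_mul]
    congr 2
    ring
  rw [sum_congr rfl fun k _ => hterm k, ← mul_sum, sum_descFactorial_mul_bernsteinPolynomial,
    ← mul_assoc, ← map_natCast C, ← map_mul, div_mul_cancel₀ _ hdesc]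

end Field

lemma eval_bernsteinPolynomial_pos {n k : ℕ} (hk : k ≤ n) {x : ℝ} (hx : x ∈ Set.Ioo (0 : ℝ) 1) :
    0 < (bernsteinPolynomial ℝ n k).eval x := by
  have h₀ := hx.1
  have h₁ : 0 < 1 - x := sub_pos.mpr hx.2
  have hchoose : (0 : ℝ) < n.choose k := by exact_mod_cast Nat.choose_pos hk
  simp only [bernsteinPolynomial, eval_mul, eval_pow, eval_natCast, eval_X, eval_sub, eval_one]
  positivity

lemma eval_bernsteinSum_pos {n : ℕ} {α : ℕ → ℝ} (hα : ∀ k ≤ n, 0 ≤ α k) (hpos : ∃ k ≤ n, 0 < α k)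
    {x : ℝ} (hx : x ∈ Set.Ioo (0 : ℝ) 1) : 0 < (bernsteinSum n α).eval x := by
  obtain ⟨k, hk, hαk⟩ := hpos
  rw [bernsteinSum, eval_finsetSum]
  refine sum_pos' (fun i hi => ?_) ⟨k, mem_range.mpr (Nat.lt_succ_of_le hk), ?_⟩
  · rw [eval_mul, eval_C]
    exact mul_nonneg (hα i (Nat.le_of_lt_succ (mem_range.mp hi)))
      (eval_bernsteinPolynomial_pos (Nat.le_of_lt_succ (mem_range.mp hi)) hx).le
  · rw [eval_mul, eval_C]
    exact mul_pos hαk (eval_bernsteinPolynomial_pos hk hx)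

lemma eval_derivative_bernsteinSum_pos {d : ℕ} {α : ℕ → ℝ} (hα : ∀ k < d, α k ≤ α (k + 1))
    (h : α 0 < α d) {x : ℝ} (hx : x ∈ Set.Ioo (0 : ℝ) 1) :
    0 < (derivative (bernsteinSum d α)).eval x := by
  obtain ⟨n, rfl⟩ : ∃ n, d = n + 1 := Nat.exists_eq_succ_of_ne_zero (by rintro rfl; exact h.false)
  rw [derivative_bernsteinSum]
  refine eval_bernsteinSum_pos
    (fun k hk => mul_nonneg (by positivity) (sub_nonneg.mpr (hα k (by omega)))) ?_ hx
  obtain ⟨k, hk, hlt⟩ := exists_lt_of_sum_lt (s := range (n + 1)) (f := fun _ => (0 : ℝ))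
    (g := fun k => α (k + 1) - α k) (by rw [sum_range_sub, sum_const_zero]; linarith)
  exact ⟨k, Nat.le_of_lt_succ (mem_range.mp hk), mul_pos (by positivity) hlt⟩

lemma norm_prod_sub_prod_le_sum_norm_sub {ι A : Type*} [NormedCommRing A] [NormOneClass A]
    (s : Finset ι) {u v : ι → A} (hu : ∀ i ∈ s, ‖u i‖ ≤ 1) (hv : ∀ i ∈ s, ‖v i‖ ≤ 1) :
    ‖∏ i ∈ s, u i - ∏ i ∈ s, v i‖ ≤ ∑ i ∈ s, ‖u i - v i‖ := by
  classical
  induction s using Finset.induction_on with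
  | empty => simp
  | insert a s ha ih =>
    rw [prod_insert ha, prod_insert ha, sum_insert ha]
    have hva : ‖∏ i ∈ s, v i‖ ≤ 1 := (Finset.norm_prod_le _ _).trans <|
      prod_le_one (fun _ _ => norm_nonneg _) fun i hi => hv i (mem_insert_of_mem hi)
    calc ‖u a * ∏ i ∈ s, u i - v a * ∏ i ∈ s, v i‖
        = ‖u a * (∏ i ∈ s, u i - ∏ i ∈ s, v i) + (u a - v a) * ∏ i ∈ s, v i‖ := by ring_nf
      _ ≤ ‖u a‖ * ‖∏ i ∈ s, u i - ∏ i ∈ s, v i‖ + ‖u a - v a‖ * ‖∏ i ∈ s, v i‖ :=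
        norm_add_le_of_le (norm_mul_le _ _) (norm_mul_le _ _)
      _ ≤ 1 * ∑ i ∈ s, ‖u i - v i‖ + ‖u a - v a‖ * 1 := by
        gcongr
        · exact hu a (mem_insert_self a s)
        · exact ih (fun i hi => hu i (mem_insert_of_mem hi)) fun i hi => hv i (mem_insert_of_mem hi)
      _ = ‖u a - v a‖ + ∑ i ∈ s, ‖u i - v i‖ := by ring

lemma abs_descFactorial_div_sub_pow_le {n k j : ℕ} (hk : k ≤ n) (hj : 2 * j ≤ n) :
    |(k.descFactorial j : ℝ) / n.descFactorial j - ((k : ℝ) / n) ^ j| ≤ 2 * j ^ 2 / n := by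
  have hprod : ∀ m : ℕ, (m.descFactorial j : ℝ) = ∏ i ∈ range j, ((m : ℝ) - i) := fun m => by
    rw [← descPochhammer_eval_eq_descFactorial, descPochhammer_eval_eq_prod_range]
  have hk' : (k : ℝ) ≤ n := by exact_mod_cast hk
  have hfactor : ∀ i ∈ range j, |((k : ℝ) - i) / (n - i)| ≤ 1 ∧
      |((k : ℝ) - i) / (n - i) - k / n| ≤ 2 * j / n := by
    intro i hi
    have hi' : 2 * (i : ℝ) + 2 ≤ n := by exact_mod_cast (by grind : 2 * i + 2 ≤ n)
    have hi0 : (0 : ℝ) ≤ i := i.cast_nonneg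
    have hij : (i : ℝ) + 1 ≤ j := by exact_mod_cast mem_range.mp hi
    have hn : (0 : ℝ) < n := by linarith
    have hni : (0 : ℝ) < n - i := by linarith
    constructor
    · rw [abs_div, abs_of_pos hni, div_le_one hni, abs_le]
      constructor <;> linarith [k.cast_nonneg (α := ℝ)]
    · rw [div_sub_div _ _ hni.ne' hn.ne', abs_div, abs_of_pos (mul_pos hni hn),
        div_le_div_iff₀ (mul_pos hni hn) hn]
      have hnum : |((k : ℝ) - i) * n - (n - i) * k| = i * (n - k) := by
        rw [show ((k : ℝ) - i) * n - (n - i) * k = -(i * (n - k)) by ring, abs_neg,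
          abs_of_nonneg (mul_nonneg hi0 (by linarith))]
      have hle : (i : ℝ) * (n - k) ≤ 2 * j * (n - i) := by
        nlinarith [mul_nonneg hi0 k.cast_nonneg, mul_nonneg (by linarith : (0 : ℝ) ≤ j - i) hn.le]
      rw [hnum, ← mul_assoc]
      exact mul_le_mul_of_nonneg_right hle hn.le
  rw [hprod, hprod, ← prod_div_distrib, pow_eq_prod_const]
  calc |∏ i ∈ range j, ((k : ℝ) - i) / (n - i) - ∏ _i ∈ range j, (k : ℝ) / n|
      ≤ ∑ i ∈ range j, |((k : ℝ) - i) / (n - i) - k / n| := by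
        simpa only [Real.norm_eq_abs] using norm_prod_sub_prod_le_sum_norm_sub (range j)
          (u := fun i => ((k : ℝ) - i) / (n - i)) (v := fun _ => (k : ℝ) / n)
          (fun i hi => by rw [Real.norm_eq_abs]; exact (hfactor i hi).1) fun _ _ => by
            rw [Real.norm_eq_abs, abs_div, Nat.abs_cast, Nat.abs_cast]
            exact div_le_one_of_le₀ hk' n.cast_nonneg
    _ ≤ ∑ _i ∈ range j, 2 * (j : ℝ) / n := sum_le_sum fun i hi => (hfactor i hi).2
    _ = 2 * j ^ 2 / n := by rw [sum_const, card_range, nsmul_eq_mul]; ring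

lemma abs_bernsteinCoeff_sub_eval_le (q : ℝ[X]) {n k : ℕ} (hk : k ≤ n) (hn : 2 * q.natDegree ≤ n) :
    |bernsteinCoeff q n k - q.eval ((k : ℝ) / n)| ≤
      (∑ j ∈ range (q.natDegree + 1), |q.coeff j|) * (2 * q.natDegree ^ 2) / n := by
  rw [eval_eq_sum_range, bernsteinCoeff, ← sum_sub_distrib, mul_div_assoc, sum_mul]
  refine (abs_sum_le_sum_abs _ _).trans <| sum_le_sum fun j hj => ?_
  have hj' : j ≤ q.natDegree := Nat.lt_succ_iff.mp (mem_range.mp hj)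
  rw [← mul_sub, abs_mul]
  gcongr
  refine (abs_descFactorial_div_sub_pow_le hk (by omega)).trans ?_
  gcongr

lemma eventually_forall_bernsteinCoeff_pos {q : ℝ[X]}
    (hq : ∀ x ∈ Set.Icc (0 : ℝ) 1, 0 < q.eval x) :
    ∀ᶠ n in Filter.atTop, ∀ k ≤ n, 0 < bernsteinCoeff q n k := by
  obtain ⟨x₀, hx₀, hmin⟩ :=
    isCompact_Icc.exists_isMinOn (Set.nonempty_Icc.mpr zero_le_one) q.continuousOn
  have hsmall := (tendsto_const_div_atTop_nhds_zero_nat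
    ((∑ j ∈ range (q.natDegree + 1), |q.coeff j|) * (2 * q.natDegree ^ 2))).eventually
      (gt_mem_nhds (hq x₀ hx₀))
  filter_upwards [hsmall, Filter.eventually_ge_atTop (2 * q.natDegree)] with n hsmall hn k hk
  have hxk : (k : ℝ) / n ∈ Set.Icc (0 : ℝ) 1 :=
    ⟨by positivity, div_le_one_of_le₀ (by exact_mod_cast hk) n.cast_nonneg⟩
  linarith [(abs_le.mp (abs_bernsteinCoeff_sub_eval_le q hk hn)).1, isMinOn_iff.mp hmin _ hxk]

lemma pos_on_Icc_of_pos_on_Ioo {f : ℝ → ℝ} (hf : Continuous f) {a b : ℝ} (hab : a < b)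
    (h : ∀ x ∈ Set.Ioo a b, 0 < f x) (ha : f a ≠ 0) (hb : f b ≠ 0) :
    ∀ x ∈ Set.Icc a b, 0 < f x := by
  have hnonneg : Set.Icc a b ⊆ {x | 0 ≤ f x} := by
    rw [← closure_Ioo hab.ne]
    exact (isClosed_le continuous_const hf).closure_subset_iff.mpr fun x hx => (h x hx).le
  intro x hx
  rcases Set.eq_endpoints_or_mem_Ioo_of_mem_Icc hx with rfl | rfl | hx'
  · exact (hnonneg hx).lt_of_ne' ha
  · exact (hnonneg hx).lt_of_ne' hb
  · exact h x hx'

lemma exists_eq_X_pow_mul_one_sub_X_pow_mul_of_pos {p : ℝ[X]}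
    (hp : ∀ x ∈ Set.Ioo (0 : ℝ) 1, 0 < p.eval x) :
    ∃ (a b : ℕ) (q : ℝ[X]),
      p = X ^ a * (1 - X) ^ b * q ∧ ∀ x ∈ Set.Icc (0 : ℝ) 1, 0 < q.eval x := by
  have hp0 : p ≠ 0 := by
    rintro rfl
    simpa using hp (1 / 2) ⟨by norm_num, by norm_num⟩
  obtain ⟨p₁, hp₁, hp₁0⟩ := exists_eq_pow_rootMultiplicity_mul_and_not_dvd p hp0 0
  have hp₁ne : p₁ ≠ 0 := by
    rintro rfl
    exact hp0 (by simpa using hp₁)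
  obtain ⟨q, hq, hq1⟩ := exists_eq_pow_rootMultiplicity_mul_and_not_dvd p₁ hp₁ne 1
  set a := p.rootMultiplicity 0
  set b := p₁.rootMultiplicity 1
  have hsign : (X - C 1 : ℝ[X]) ^ b = (1 - X) ^ b * (-1) ^ b := by
    rw [← mul_pow, mul_neg_one, neg_sub, map_one]
  have hfactor : p = X ^ a * (1 - X) ^ b * ((-1) ^ b * q) := by
    rw [hp₁, hq, hsign, map_zero, sub_zero]
    ring
  refine ⟨a, b, (-1) ^ b * q, hfactor, pos_on_Icc_of_pos_on_Ioo (Polynomial.continuous _) one_pos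
    (fun x hx => ?_) ?_ ?_⟩
  · have hx₀ : 0 < x ^ a * (1 - x) ^ b := by
      have := hx.1
      have : 0 < 1 - x := sub_pos.mpr hx.2
      positivity
    have := hp x hx
    rw [hfactor, eval_mul, eval_mul, eval_pow, eval_pow, eval_X, eval_sub, eval_one, eval_X] at this
    exact pos_of_mul_pos_right this hx₀.le
  · rw [dvd_iff_isRoot, IsRoot, hq, hsign] at hp₁0
    simpa using hp₁0
  · rw [dvd_iff_isRoot, IsRoot] at hq1
    simpa using hq1

def HasNonnegBernsteinForm (p : ℝ[X]) : Prop :=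
  ∃ n α, (∀ k ≤ n, 0 ≤ α k) ∧ bernsteinSum n α = p

namespace HasNonnegBernsteinForm

lemma X_mul {p : ℝ[X]} (hp : HasNonnegBernsteinForm p) : HasNonnegBernsteinForm (X * p) := by
  obtain ⟨n, α, hα, rfl⟩ := hp
  exact ⟨n + 1, _, fun k hk => mul_nonneg (by positivity) (hα (k - 1) (by omega)),
    (X_mul_bernsteinSum n α).symm⟩

lemma one_sub_X_mul {p : ℝ[X]} (hp : HasNonnegBernsteinForm p) :
    HasNonnegBernsteinForm ((1 - X) * p) := by
  obtain ⟨n, α, hα, rfl⟩ := hp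
  refine ⟨n + 1, _, fun k hk => ?_, (one_sub_X_mul_bernsteinSum n α).symm⟩
  rcases hk.lt_or_eq with hk | rfl
  · exact mul_nonneg (by positivity) (hα k (by omega))
  · simp

lemma X_pow_mul_one_sub_X_pow_mul {p : ℝ[X]} (hp : HasNonnegBernsteinForm p) (a b : ℕ) :
    HasNonnegBernsteinForm (X ^ a * (1 - X) ^ b * p) := by
  induction a with
  | zero =>
    induction b with
    | zero => simpa using hp
    | succ b ih => simpa only [pow_succ', pow_zero, one_mul, mul_assoc] using ih.one_sub_X_mul
  | succ a ih => simpa only [pow_succ', mul_assoc] using ih.X_mul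

end HasNonnegBernsteinForm

lemma hasNonnegBernsteinForm_of_pos_on_Icc {q : ℝ[X]}
    (hq : ∀ x ∈ Set.Icc (0 : ℝ) 1, 0 < q.eval x) :
    HasNonnegBernsteinForm q := by
  obtain ⟨n, hpos, hn⟩ :=
    ((eventually_forall_bernsteinCoeff_pos hq).and (Filter.eventually_ge_atTop q.natDegree)).exists
  exact ⟨n, bernsteinCoeff q n, fun k hk => (hpos k hk).le, bernsteinSum_bernsteinCoeff hn⟩

lemma hasNonnegBernsteinForm_of_pos_on_Ioo {p : ℝ[X]}
    (hp : ∀ x ∈ Set.Ioo (0 : ℝ) 1, 0 < p.eval x) :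
    HasNonnegBernsteinForm p := by
  obtain ⟨a, b, q, rfl, hq⟩ := exists_eq_X_pow_mul_one_sub_X_pow_mul_of_pos hp
  exact (hasNonnegBernsteinForm_of_pos_on_Icc hq).X_pow_mul_one_sub_X_pow_mul a b

lemma exists_bernsteinSum_eq_of_hasNonnegBernsteinForm_derivative {g : ℝ[X]}
    (h : HasNonnegBernsteinForm (derivative g)) :
    ∃ d α, α 0 = g.eval 0 ∧ (∀ k < d, α k ≤ α (k + 1)) ∧ bernsteinSum d α = g := by
  obtain ⟨N, e, he, hN⟩ := h
  set α : ℕ → ℝ := fun k => g.eval 0 + ∑ i ∈ range k, e i / (N + 1)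
  have hstep : ∀ k, α (k + 1) - α k = e k / (N + 1) := fun k => by
    simp only [α, sum_range_succ]
    ring
  have hderiv : derivative (g - bernsteinSum (N + 1) α) = 0 := by
    rw [derivative_sub, derivative_bernsteinSum, ← hN, sub_eq_zero]
    congr 1
    funext k
    rw [hstep]
    field_simp
  have hα0 : α 0 = g.eval 0 := by simp [α]
  have hconst := eq_C_of_derivative_eq_zero hderiv
  rw [coeff_zero_eq_eval_zero, eval_sub, eval_zero_bernsteinSum, hα0, sub_self, map_zero,
    sub_eq_zero] at hconst
  refine ⟨N + 1, α, hα0, fun k hk => ?_, hconst.symm⟩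
  rw [← sub_nonneg, hstep]
  exact div_nonneg (he k (by omega)) (by positivity)

theorem random_threshold_representation (g : Polynomial ℝ) :
    (∃ d : ℕ, g.natDegree ≤ d ∧ ∃ α : ℕ → ℝ,
      α 0 = 0 ∧ α d = 1 ∧ (∀ k, 1 ≤ k → k ≤ d → α (k - 1) ≤ α k) ∧
      g = ∑ k ∈ Finset.range (d + 1), Polynomial.C (α k) * bernsteinPolynomial ℝ d k)
    ↔ (g.eval 0 = 0 ∧ g.eval 1 = 1 ∧
        ∀ x ∈ Set.Ioo (0 : ℝ) 1,
          (0 < g.eval x ∧ g.eval x < 1) ∧ 0 < (Polynomial.derivative g).eval x) := by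
  constructor
  · rintro ⟨d, -, α, hα0, hαd, hmono, hg⟩
    change g = bernsteinSum d α at hg
    have hg0 : g.eval 0 = 0 := by rw [hg, eval_zero_bernsteinSum, hα0]
    have hg1 : g.eval 1 = 1 := by rw [hg, eval_one_bernsteinSum, hαd]
    have hderiv : ∀ x ∈ Set.Ioo (0 : ℝ) 1, 0 < (derivative g).eval x := fun x hx =>
      hg ▸ eval_derivative_bernsteinSum_pos (fun k hk => by simpa using hmono (k + 1) (by omega) hk)
        (by rw [hα0, hαd]; exact one_pos) hx
    have hstrict : StrictMonoOn g.eval (Set.Icc 0 1) :=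
      strictMonoOn_of_deriv_pos (convex_Icc 0 1) g.continuousOn fun x hx =>
        (g.deriv (x := x)).symm ▸ hderiv x (interior_Icc (a := (0 : ℝ)) (b := 1) ▸ hx)
    refine ⟨hg0, hg1, fun x hx => ⟨⟨?_, ?_⟩, hderiv x hx⟩⟩
    · exact hg0 ▸ hstrict (Set.left_mem_Icc.mpr zero_le_one) (Set.Ioo_subset_Icc_self hx) hx.1
    · exact hg1 ▸ hstrict (Set.Ioo_subset_Icc_self hx) (Set.right_mem_Icc.mpr zero_le_one) hx.2
  · rintro ⟨hg0, hg1, hg⟩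
    obtain ⟨d, α, hα0, hmono, hgα⟩ := exists_bernsteinSum_eq_of_hasNonnegBernsteinForm_derivative
      (hasNonnegBernsteinForm_of_pos_on_Ioo fun x hx => (hg x hx).2)
    refine ⟨d, hgα ▸ natDegree_bernsteinSum_le d α, α, hα0.trans hg0, ?_,
      fun k hk1 hkd => ?_, hgα.symm⟩
    · rw [← eval_one_bernsteinSum d α, hgα, hg1]
    · simpa [Nat.sub_add_cancel hk1] using hmono (k - 1) (by omega)
end

section
/- Let E_q = ∫_ℝ y·q(y) dy. (i) If ℓ_− ∈ ℝ and φ_− : ℝ → ℝ is a nondecreasing function satisfying φ_−(x) = g((q_{ℓ_−} * φ_−)(x)) for all x, with lim_{x→−∞} φ_−(x) = 0 and lim_{x→+∞} φ_−(x) = θ, then ℓ_− > E_q. (ii) If ℓ_+ ∈ ℝ and φ_+ : ℝ → ℝ is a nondecreasing function satisfying φ_+(x) = g((q_{ℓ_+} * φ_+)(x)) for all x, with lim_{x→−∞} φ_+(x) = θ and lim_{x→+∞} φ_+(x) = 1, then ℓ_+ < E_q. In particular, ℓ_− > ℓ_+. -/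
open MeasureTheory Filter Topology

/-- Convolution `(q * u)(x) = ∫ q(y) u(x - y) dy`. -/
noncomputable def conv (q u : ℝ → ℝ) (x : ℝ) : ℝ := ∫ y : ℝ, q y * u (x - y)

/-- The shifted kernel `q_ℓ(x) = q(x + ℓ)`. -/
def qshift (q : ℝ → ℝ) (ℓ : ℝ) (x : ℝ) : ℝ := q (x + ℓ)

/-- The bistable setting: a `C¹` compactly supported probability density `q`, and a
polynomial `P` (the recursion polynomial, i.e. `g` on `[0,1]`) with `P(0) = 0`, `P(1) = 1`,
`0 < P < 1` and `P' > 0` on `(0,1)`; the nonlinearity `f(x) = P(x) - x` has a unique zero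
`θ ∈ (0,1)` and `f'(0) < 0`, `f'(1) < 0` (equivalently `P'(0) < 1`, `P'(1) < 1`). -/
structure BistableSetting where
  q : ℝ → ℝ
  P : Polynomial ℝ
  θ : ℝ
  hq_diff : ContDiff ℝ 1 q
  hq_supp : HasCompactSupport q
  hq_nonneg : ∀ x, 0 ≤ q x
  hq_int : ∫ x : ℝ, q x = 1
  hP0 : P.eval 0 = 0
  hP1 : P.eval 1 = 1
  hP_range : ∀ x ∈ Set.Ioo (0 : ℝ) 1, 0 < P.eval x ∧ P.eval x < 1
  hP_mono : ∀ x ∈ Set.Ioo (0 : ℝ) 1, 0 < (Polynomial.derivative P).eval x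
  hθ_mem : θ ∈ Set.Ioo (0 : ℝ) 1
  hθ_zero : P.eval θ = θ
  hθ_unique : ∀ x ∈ Set.Ioo (0 : ℝ) 1, P.eval x = x → x = θ
  hf'0 : (Polynomial.derivative P).eval 0 < 1
  hf'1 : (Polynomial.derivative P).eval 1 < 1

/-- The nonlinearity `g`, equal to the polynomial `P` on `[0,1]` and extended linearly:
`g(x) = x + f'(0)·x` for `x < 0` and `g(x) = x + f'(1)(x-1)` for `x > 1`. -/
noncomputable def BistableSetting.g (S : BistableSetting) (x : ℝ) : ℝ :=
  if x < 0 then (Polynomial.derivative S.P).eval 0 * x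
  else if x ≤ 1 then S.P.eval x
  else 1 + (Polynomial.derivative S.P).eval 1 * (x - 1)

/-- A traveling wave with speed `ℓ`: a nondecreasing `C¹` function `φ` with
`φ = g(q_ℓ * φ)`, `φ(-∞) = 0` and `φ(+∞) = 1`. -/
structure IsTravelingWave (S : BistableSetting) (ℓ : ℝ) (φ : ℝ → ℝ) : Prop where
  mono : Monotone φ
  smooth : ContDiff ℝ 1 φ
  wave_eq : ∀ x, φ x = S.g (conv (qshift S.q ℓ) φ x)
  limit_bot : Tendsto φ atBot (𝓝 0)
  limit_top : Tendsto φ atTop (𝓝 1)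

/-!
Integrate the wave equation over a window `[-T, T]`. With `ψ = q_ℓ * φ`, Fubini writes
`∫_{-T}^{T} (ψ - φ)` as the `q_ℓ(y) dy`-average of
`∫_{-T}^{T} (φ(x - y) - φ(x)) dx = ∫_0^y (φ(-T - s) - φ(T - s)) ds`, which tends to
`y (φ(-∞) - φ(+∞))`; so the window integral tends to `(φ(-∞) - φ(+∞)) (E_q - ℓ)`.
For the wave from `0` to `θ`, `ψ` takes values in `[0, θ]`, where `g ≤ id` with equality only at
the endpoints, so `ψ - φ = ψ - g(ψ)` is continuous, nonnegative, and positive where `φ = θ / 2`: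
the limit is positive, i.e. `ℓ > E_q`. The wave from `θ` to `1` reduces to the same argument
after the reflection `φ(x) ↦ -φ(-x)`, since `g ≥ id` on `[θ, 1]`.
-/

open MeasureTheory Filter Topology Set

section Convolution

variable {k φ : ℝ → ℝ} {A B : ℝ}

lemma conv_eq_convolution (k φ : ℝ → ℝ) :
    conv k φ = convolution k φ (ContinuousLinearMap.lsmul ℝ ℝ) volume := by
  ext x
  simp [conv, convolution_def]

lemma integrable_mul_comp_sub (hk : Integrable k) (hφ : Measurable φ)
    (hφAB : ∀ x, φ x ∈ Icc A B) (x : ℝ) : Integrable fun y => k y * φ (x - y) :=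
  hk.mul_bdd (hφ.comp (measurable_const.sub measurable_id)).aestronglyMeasurable
    (ae_of_all _ fun _ => abs_le_max_abs_abs (hφAB _).1 (hφAB _).2)

lemma conv_mem_Icc (hk : Integrable k) (hk0 : ∀ y, 0 ≤ k y) (hk1 : ∫ y, k y = 1)
    (hφ : Measurable φ) (hφAB : ∀ x, φ x ∈ Icc A B) (x : ℝ) : conv k φ x ∈ Icc A B := by
  have hint := integrable_mul_comp_sub hk hφ hφAB x
  have hconst : ∀ c, ∫ y, k y * c = c := fun c => by rw [integral_mul_const, hk1, one_mul]
  constructor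
  · calc A = ∫ y, k y * A := (hconst A).symm
      _ ≤ conv k φ x := integral_mono (hk.mul_const A) hint
          fun y => mul_le_mul_of_nonneg_left (hφAB _).1 (hk0 y)
  · calc conv k φ x ≤ ∫ y, k y * B := integral_mono hint (hk.mul_const B)
          fun y => mul_le_mul_of_nonneg_left (hφAB _).2 (hk0 y)
      _ = B := hconst B

lemma intervalIntegral_conv_sub_self (hk : Integrable k) (hk1 : ∫ y, k y = 1)
    (hφ : Measurable φ) (hφAB : ∀ x, φ x ∈ Icc A B) {a b : ℝ} (hab : a ≤ b) :
    ∫ x in a..b, (conv k φ x - φ x) = ∫ y, k y * ∫ x in a..b, (φ (x - y) - φ x) := by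
  have hpoint : ∀ x, conv k φ x - φ x = ∫ y, k y * (φ (x - y) - φ x) := fun x => by
    simp only [mul_sub]
    rw [integral_sub (integrable_mul_comp_sub hk hφ hφAB x) (hk.mul_const _),
      integral_mul_const, hk1, one_mul, conv]
  have hprod : Integrable (Function.uncurry fun x y => k y * (φ (x - y) - φ x))
      ((volume.restrict (Ioc a b)).prod volume) := by
    refine (hk.comp_snd _).mul_bdd (c := B - A) ?_ (ae_of_all _ fun p => ?_)
    · exact ((hφ.comp (measurable_fst.sub measurable_snd)).sub
        (hφ.comp measurable_fst)).aestronglyMeasurable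
    · rw [← dist_eq_norm]; exact Real.dist_le_of_mem_Icc (hφAB _) (hφAB _)
  simp only [hpoint, intervalIntegral.integral_of_le hab, ← integral_const_mul]
  exact integral_integral_swap hprod

end Convolution

section ShiftIntegral

variable {φ : ℝ → ℝ} {A B : ℝ}

lemma intervalIntegral_comp_sub_sub_self (hφ : ∀ a b, IntervalIntegrable φ volume a b)
    (a b c : ℝ) :
    ∫ x in a..b, (φ (x - c) - φ x) = ∫ s in 0..c, (φ (a - s) - φ (b - s)) := by
  have hright : IntervalIntegrable (fun x => φ (x - c)) volume a b := by
    simpa using (hφ (a - c) (b - c)).comp_sub_right c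
  have hleft : ∀ d, IntervalIntegrable (fun s => φ (d - s)) volume 0 c := fun d => by
    simpa using (hφ d (d - c)).comp_sub_left d
  rw [intervalIntegral.integral_sub hright (hφ a b),
    intervalIntegral.integral_sub (hleft a) (hleft b),
    intervalIntegral.integral_comp_sub_right, intervalIntegral.integral_comp_sub_left,
    intervalIntegral.integral_comp_sub_left, sub_zero, sub_zero,
    intervalIntegral.integral_interval_sub_interval_comm (hφ _ _) (hφ _ _) (hφ _ _)]

lemma abs_intervalIntegral_comp_sub_sub_self_le (hφ : Monotone φ) (hφAB : ∀ x, φ x ∈ Icc A B)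
    (a b c : ℝ) : |∫ x in a..b, (φ (x - c) - φ x)| ≤ |c| * (B - A) := by
  rw [intervalIntegral_comp_sub_sub_self (fun _ _ => hφ.intervalIntegrable)]
  have hbound : ∀ s, ‖φ (a - s) - φ (b - s)‖ ≤ B - A := fun s => by
    rw [← dist_eq_norm]; exact Real.dist_le_of_mem_Icc (hφAB _) (hφAB _)
  calc _ ≤ (B - A) * |c - 0| :=
        intervalIntegral.norm_integral_le_of_norm_le_const fun s _ => hbound s
    _ = |c| * (B - A) := by rw [sub_zero, mul_comm]

lemma Monotone.tendsto_intervalIntegral_comp_sub_sub_self (hφ : Monotone φ)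
    (hA : Tendsto φ atBot (𝓝 A)) (hB : Tendsto φ atTop (𝓝 B)) (c : ℝ) :
    Tendsto (fun T => ∫ x in -T..T, (φ (x - c) - φ x)) atTop (𝓝 (c * (A - B))) := by
  have hφAB : ∀ x, φ x ∈ Icc A B := fun x => ⟨hφ.le_of_tendsto hA x, hφ.ge_of_tendsto hB x⟩
  simp only [intervalIntegral_comp_sub_sub_self (fun _ _ => hφ.intervalIntegrable)]
  have hlim : ∫ _ in (0 : ℝ)..c, (A - B) = c * (A - B) := by simp [mul_sub]
  rw [← hlim]
  refine intervalIntegral.tendsto_integral_filter_of_dominated_convergence (fun _ => B - A)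
    (.of_forall fun T => ((hφ.measurable.comp (measurable_const.sub measurable_id)).sub
      (hφ.measurable.comp (measurable_const.sub measurable_id))).aestronglyMeasurable)
    (.of_forall fun T => ae_of_all _ fun s _ => ?_) intervalIntegrable_const
    (ae_of_all _ fun s _ => ?_)
  · rw [← dist_eq_norm]; exact Real.dist_le_of_mem_Icc (hφAB _) (hφAB _)
  · refine (hA.comp ?_).sub (hB.comp ?_)
    · exact tendsto_atBot_add_const_right _ _ tendsto_neg_atTop_atBot
    · exact tendsto_atTop_add_const_right _ _ tendsto_id

end ShiftIntegral

section MassBalance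

variable {k φ : ℝ → ℝ} {A B : ℝ}

theorem Monotone.tendsto_intervalIntegral_conv_sub_self (hk : Integrable k)
    (hyk : Integrable fun y => y * k y) (hk1 : ∫ y, k y = 1) (hφ : Monotone φ)
    (hA : Tendsto φ atBot (𝓝 A)) (hB : Tendsto φ atTop (𝓝 B)) :
    Tendsto (fun T => ∫ x in -T..T, (conv k φ x - φ x)) atTop
      (𝓝 ((A - B) * ∫ y, y * k y)) := by
  have hφAB : ∀ x, φ x ∈ Icc A B := fun x => ⟨hφ.le_of_tendsto hA x, hφ.ge_of_tendsto hB x⟩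
  have hfubini : ∀ᶠ T in atTop, ∫ y, k y * ∫ x in -T..T, (φ (x - y) - φ x)
      = ∫ x in -T..T, (conv k φ x - φ x) := by
    filter_upwards [eventually_ge_atTop 0] with T hT
    exact (intervalIntegral_conv_sub_self hk hk1 hφ.measurable hφAB (by linarith)).symm
  have hcont : ∀ T : ℝ, Continuous fun y => ∫ x in -T..T, (φ (x - y) - φ x) := by
    intro T
    have hanti : ∀ c, Antitone fun s => φ (c - s) := fun c =>
      hφ.comp_antitone fun _ _ h => sub_le_sub_left h c
    simp only [intervalIntegral_comp_sub_sub_self (fun _ _ => hφ.intervalIntegrable)]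
    exact intervalIntegral.continuous_primitive
      (fun _ _ => (hanti _).intervalIntegrable.sub (hanti _).intervalIntegrable) 0
  have hmoment : ∫ y, k y * (y * (A - B)) = (A - B) * ∫ y, y * k y := by
    rw [← integral_const_mul]
    congr 1 with y
    ring
  rw [← hmoment]
  refine (tendsto_integral_filter_of_dominated_convergence
    (F := fun T y => k y * ∫ x in -T..T, (φ (x - y) - φ x)) (fun y => (B - A) * ‖y * k y‖)
    (.of_forall fun T => hk.aestronglyMeasurable.mul (hcont T).aestronglyMeasurable)
    (.of_forall fun T => ae_of_all _ fun y => ?_) (hyk.norm.const_mul _)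
    (ae_of_all _ fun y => ?_)).congr' hfubini
  · calc ‖k y * ∫ x in -T..T, (φ (x - y) - φ x)‖
          = ‖k y‖ * |∫ x in -T..T, (φ (x - y) - φ x)| := by simp only [norm_mul, Real.norm_eq_abs]
      _ ≤ ‖k y‖ * (|y| * (B - A)) := mul_le_mul_of_nonneg_left
          (abs_intervalIntegral_comp_sub_sub_self_le hφ hφAB (-T) T y) (norm_nonneg _)
      _ = (B - A) * ‖y * k y‖ := by simp only [norm_mul, Real.norm_eq_abs]; ring
  · exact (hφ.tendsto_intervalIntegral_comp_sub_sub_self hA hB y).const_mul (k y)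

end MassBalance

section Waves

variable {k φ h ψ d : ℝ → ℝ} {A B : ℝ}

lemma Monotone.continuous_conv (hkc : Continuous k) (hks : HasCompactSupport k)
    (hφ : Monotone φ) : Continuous (conv k φ) := by
  rw [conv_eq_convolution]
  exact hks.continuous_convolution_left _ hkc hφ.locallyIntegrable

lemma pos_of_tendsto_intervalIntegral (hd : Continuous d) (hd0 : ∀ x, 0 ≤ d x) {x₀ : ℝ}
    (hx₀ : 0 < d x₀) {L : ℝ} (hL : Tendsto (fun T => ∫ x in -T..T, d x) atTop (𝓝 L)) :
    0 < L := by
  set T₀ := |x₀| + 1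
  have hpos : 0 < ∫ x in -T₀..T₀, d x :=
    intervalIntegral.integral_pos (by linarith [abs_nonneg x₀]) hd.continuousOn
      (fun x _ => hd0 x) ⟨x₀, ⟨by linarith [neg_abs_le x₀], by linarith [le_abs_self x₀]⟩, hx₀⟩
  refine hpos.trans_le (ge_of_tendsto hL ?_)
  filter_upwards [eventually_ge_atTop T₀] with T hT
  exact intervalIntegral.integral_mono_interval (by linarith) (by linarith [abs_nonneg x₀])
    hT (ae_of_all _ fun x => hd0 x) (hd.intervalIntegrable _ _)

lemma exists_mem_Ioo_of_tendsto_comp (hψ : Continuous ψ) (hψAB : ∀ x, ψ x ∈ Icc A B)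
    (hh : Continuous h) (hhA : h A = A) (hhB : h B = B) (hAB : A < B)
    (hA : Tendsto (h ∘ ψ) atBot (𝓝 A)) (hB : Tendsto (h ∘ ψ) atTop (𝓝 B)) :
    ∃ x, ψ x ∈ Ioo A B := by
  obtain ⟨x, hx⟩ : (A + B) / 2 ∈ range (h ∘ ψ) :=
    mem_range_of_exists_le_of_exists_ge (hh.comp hψ)
      (hA.eventually (eventually_le_nhds (by linarith))).exists
      (hB.eventually (eventually_ge_nhds (by linarith))).exists
  refine ⟨x, lt_of_le_of_ne (hψAB x).1 fun hxA => ?_, lt_of_le_of_ne (hψAB x).2 fun hxB => ?_⟩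
  · rw [Function.comp_apply, ← hxA, hhA] at hx; linarith
  · rw [Function.comp_apply, hxB, hhB] at hx; linarith

theorem Monotone.integral_mul_neg_of_wave (hkc : Continuous k) (hks : HasCompactSupport k)
    (hk0 : ∀ y, 0 ≤ k y) (hk1 : ∫ y, k y = 1) (hh : Continuous h) (hhA : h A = A)
    (hhB : h B = B) (hh_lt : ∀ t ∈ Ioo A B, h t < t) (hφ : Monotone φ)
    (hwave : ∀ x, φ x = h (conv k φ x)) (hA : Tendsto φ atBot (𝓝 A))
    (hB : Tendsto φ atTop (𝓝 B)) (hAB : A < B) : ∫ y, y * k y < 0 := by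
  have hk : Integrable k := hkc.integrable_of_hasCompactSupport hks
  have hψ := hφ.continuous_conv hkc hks
  have hψAB := conv_mem_Icc hk hk0 hk1 hφ.measurable
    fun x => ⟨hφ.le_of_tendsto hA x, hφ.ge_of_tendsto hB x⟩
  have hφψ : φ = h ∘ conv k φ := funext hwave
  obtain ⟨x₀, hx₀⟩ := exists_mem_Ioo_of_tendsto_comp hψ hψAB hh hhA hhB hAB (hφψ ▸ hA) (hφψ ▸ hB)
  have hle : ∀ t ∈ Icc A B, h t ≤ t := by
    rintro t ⟨htA, htB⟩
    rcases htA.eq_or_lt with rfl | htA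
    · rw [hhA]
    rcases htB.eq_or_lt with rfl | htB
    · rw [hhB]
    exact (hh_lt t ⟨htA, htB⟩).le
  have hlim := hφ.tendsto_intervalIntegral_conv_sub_self hk
    ((continuous_id.mul hkc).integrable_of_hasCompactSupport hks.mul_left) hk1 hA hB
  have hφc : Continuous φ := hφψ ▸ hh.comp hψ
  have hpos := pos_of_tendsto_intervalIntegral (d := fun x => conv k φ x - φ x) (hψ.sub hφc)
    (fun x => by rw [sub_nonneg, hwave x]; exact hle _ (hψAB x))
    (x₀ := x₀) (by rw [sub_pos, hwave x₀]; exact hh_lt _ hx₀) hlim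
  exact neg_of_mul_pos_right hpos (by linarith)

lemma conv_comp_neg (k φ : ℝ → ℝ) (x : ℝ) :
    conv (fun y => k (-y)) (fun x => -φ (-x)) x = -conv k φ (-x) := by
  simp only [conv, ← integral_neg]
  rw [← integral_neg_eq_self]
  congr 1 with y
  simp only [neg_neg, mul_neg, sub_eq_add_neg, neg_add]

theorem Monotone.integral_mul_pos_of_wave (hkc : Continuous k) (hks : HasCompactSupport k)
    (hk0 : ∀ y, 0 ≤ k y) (hk1 : ∫ y, k y = 1) (hh : Continuous h) (hhA : h A = A)
    (hhB : h B = B) (hh_gt : ∀ t ∈ Ioo A B, t < h t) (hφ : Monotone φ)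
    (hwave : ∀ x, φ x = h (conv k φ x)) (hA : Tendsto φ atBot (𝓝 A))
    (hB : Tendsto φ atTop (𝓝 B)) (hAB : A < B) : 0 < ∫ y, y * k y := by
  have hreflected := Monotone.integral_mul_neg_of_wave (k := fun y => k (-y))
    (φ := fun x => -φ (-x)) (h := fun t => -h (-t)) (A := -B) (B := -A)
    (hkc.comp continuous_neg) (hks.comp_homeomorph (Homeomorph.neg ℝ)) (fun y => hk0 _)
    (by rw [integral_neg_eq_self k]; exact hk1) (hh.comp continuous_neg).neg
    (by rw [neg_neg, hhB]) (by rw [neg_neg, hhA])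
    (fun t ht => by linarith [hh_gt (-t) ⟨by linarith [ht.2], by linarith [ht.1]⟩])
    (fun _ _ hxy => neg_le_neg (hφ (neg_le_neg hxy)))
    (fun x => by rw [conv_comp_neg, neg_neg, ← hwave])
    (by simpa using (hB.comp tendsto_neg_atBot_atTop).neg)
    (by simpa using (hA.comp tendsto_neg_atTop_atBot).neg) (neg_lt_neg hAB)
  have hmoment : ∫ y, y * k (-y) = -∫ y, y * k y := by
    rw [← integral_neg, ← integral_neg_eq_self]
    simp only [neg_neg, neg_mul]
  linarith

end Waves

section SignOnInterval

variable {f : ℝ → ℝ} {a b : ℝ}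

lemma IsPreconnected.neg_of_forall_ne_zero {s : Set ℝ} (hs : IsPreconnected s)
    (hf : ContinuousOn f s) (hne : ∀ x ∈ s, f x ≠ 0) {x₁ : ℝ} (hx₁ : x₁ ∈ s) (h₁ : f x₁ < 0)
    {x : ℝ} (hx : x ∈ s) : f x < 0 := by
  by_contra! hfx
  obtain ⟨y, hy, hy0⟩ := hs.intermediate_value hx₁ hx hf ⟨h₁.le, hfx⟩
  exact hne y hy hy0

lemma exists_mem_Ioo_neg_of_deriv_neg (hf' : deriv f a < 0) (hfa : f a = 0) (hab : a < b) :
    ∃ x ∈ Ioo a b, f x < 0 := by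
  obtain ⟨x, hsign, hx⟩ := (((eventually_nhdsWithin_sign_eq_of_deriv_neg hf' hfa).filter_mono
    nhdsWithin_le_nhds).and (Ioo_mem_nhdsGT hab)).exists
  rw [sign_neg (by linarith [hx.1] : a - x < 0), sign_eq_neg_one_iff] at hsign
  exact ⟨x, hx, hsign⟩

lemma exists_mem_Ioo_pos_of_deriv_neg (hf' : deriv f b < 0) (hfb : f b = 0) (hab : a < b) :
    ∃ x ∈ Ioo a b, 0 < f x := by
  obtain ⟨x, hsign, hx⟩ := (((eventually_nhdsWithin_sign_eq_of_deriv_neg hf' hfb).filter_mono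
    nhdsWithin_le_nhds).and (Ioo_mem_nhdsLT hab)).exists
  rw [sign_pos (by linarith [hx.2] : 0 < b - x), sign_eq_one_iff] at hsign
  exact ⟨x, hx, hsign⟩

end SignOnInterval

section ShiftedKernel

variable {q : ℝ → ℝ}

lemma HasCompactSupport.qshift (hq : HasCompactSupport q) (ℓ : ℝ) :
    HasCompactSupport (qshift q ℓ) :=
  hq.comp_homeomorph (Homeomorph.addRight ℓ)

lemma integral_qshift (q : ℝ → ℝ) (ℓ : ℝ) : ∫ y, qshift q ℓ y = ∫ y, q y :=
  integral_add_right_eq_self q ℓ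

lemma integral_mul_qshift (hq : Integrable q) (hyq : Integrable fun y => y * q y) (ℓ : ℝ) :
    ∫ y, y * qshift q ℓ y = (∫ y, y * q y) - ℓ * ∫ y, q y := by
  have h := integral_add_right_eq_self (μ := volume) (fun y => (y - ℓ) * q y) ℓ
  simp only [add_sub_cancel_right, sub_mul] at h
  simp only [qshift]
  rw [h, integral_sub hyq (hq.const_mul ℓ), integral_const_mul]

end ShiftedKernel

namespace BistableSetting

variable (S : BistableSetting)

lemma g_of_mem_Icc {t : ℝ} (ht : t ∈ Icc (0 : ℝ) 1) : S.g t = S.P.eval t := by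
  rw [BistableSetting.g, if_neg (not_lt.2 ht.1), if_pos ht.2]

lemma continuous_g : Continuous S.g := by
  refine Continuous.if (fun t ht => ?_) (by fun_prop) (Continuous.if (fun t ht => ?_) (by fun_prop)
    (by fun_prop))
  · rw [show {x : ℝ | x < 0} = Iio 0 from rfl, frontier_Iio, mem_singleton_iff] at ht
    simp [ht, S.hP0]
  · rw [show {x : ℝ | x ≤ 1} = Iic 1 from rfl, frontier_Iic, mem_singleton_iff] at ht
    simp [ht, S.hP1]

lemma g_zero : S.g 0 = 0 := by rw [S.g_of_mem_Icc ⟨le_rfl, zero_le_one⟩, S.hP0]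

lemma g_one : S.g 1 = 1 := by rw [S.g_of_mem_Icc ⟨zero_le_one, le_rfl⟩, S.hP1]

lemma g_theta : S.g S.θ = S.θ := by
  rw [S.g_of_mem_Icc (Ioo_subset_Icc_self S.hθ_mem), S.hθ_zero]

lemma eval_sub_self_ne_zero {t : ℝ} (ht : t ∈ Ioo (0 : ℝ) 1) (hθ : t ≠ S.θ) :
    S.P.eval t - t ≠ 0 :=
  fun h => hθ (S.hθ_unique t ht (sub_eq_zero.1 h))

lemma hasDerivAt_eval_sub_self (x : ℝ) :
    HasDerivAt (fun t => S.P.eval t - t) ((Polynomial.derivative S.P).eval x - 1) x :=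
  (S.P.hasDerivAt x).sub (hasDerivAt_id' x)

lemma g_lt_self {t : ℝ} (ht : t ∈ Ioo (0 : ℝ) S.θ) : S.g t < t := by
  have hsub : Ioo 0 S.θ ⊆ Ioo (0 : ℝ) 1 := Ioo_subset_Ioo_right S.hθ_mem.2.le
  obtain ⟨x₁, hx₁, hneg⟩ := exists_mem_Ioo_neg_of_deriv_neg
    (by rw [(S.hasDerivAt_eval_sub_self 0).deriv]; linarith [S.hf'0]) (by simp [S.hP0])
    S.hθ_mem.1
  rw [S.g_of_mem_Icc (Ioo_subset_Icc_self (hsub ht)), ← sub_neg]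
  exact isPreconnected_Ioo.neg_of_forall_ne_zero (by fun_prop)
    (fun x hx => S.eval_sub_self_ne_zero (hsub hx) hx.2.ne) hx₁ hneg ht

lemma self_lt_g {t : ℝ} (ht : t ∈ Ioo S.θ 1) : t < S.g t := by
  have hsub : Ioo S.θ 1 ⊆ Ioo (0 : ℝ) 1 := Ioo_subset_Ioo_left S.hθ_mem.1.le
  obtain ⟨x₁, hx₁, hpos⟩ := exists_mem_Ioo_pos_of_deriv_neg
    (by rw [(S.hasDerivAt_eval_sub_self 1).deriv]; linarith [S.hf'1]) (by simp [S.hP1])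
    S.hθ_mem.2
  rw [S.g_of_mem_Icc (Ioo_subset_Icc_self (hsub ht)), ← sub_pos, ← neg_neg (_ - t), neg_pos]
  exact isPreconnected_Ioo.neg_of_forall_ne_zero (f := fun t => -(S.P.eval t - t))
    (by fun_prop) (fun x hx => neg_ne_zero.2 (S.eval_sub_self_ne_zero (hsub hx) hx.1.ne'))
    hx₁ (neg_neg_of_pos hpos) ht

end BistableSetting

/-- Speed comparison: any nondecreasing traveling wave connecting `0` to `θ` moves faster
than the mean `E_q = ∫ y q(y) dy` of the step density, and any nondecreasing traveling
wave connecting `θ` to `1` moves slower; in particular `ℓ₋ > ℓ₊`. -/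
theorem traveling_wave_speed_comparison (S : BistableSetting) :
    (∀ (ℓm : ℝ) (φm : ℝ → ℝ), Monotone φm →
        (∀ x, φm x = S.g (conv (qshift S.q ℓm) φm x)) →
        Tendsto φm atBot (𝓝 0) → Tendsto φm atTop (𝓝 S.θ) →
        (∫ y : ℝ, y * S.q y) < ℓm) ∧
    (∀ (ℓp : ℝ) (φp : ℝ → ℝ), Monotone φp →
        (∀ x, φp x = S.g (conv (qshift S.q ℓp) φp x)) →
        Tendsto φp atBot (𝓝 S.θ) → Tendsto φp atTop (𝓝 1) →
        ℓp < ∫ y : ℝ, y * S.q y) := by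
  have hqc : Continuous S.q := S.hq_diff.continuous
  have hkc (ℓ : ℝ) : Continuous (qshift S.q ℓ) := hqc.comp (continuous_add_const ℓ)
  have hk1 (ℓ : ℝ) : ∫ y, qshift S.q ℓ y = 1 := (integral_qshift S.q ℓ).trans S.hq_int
  have hmean (ℓ : ℝ) : ∫ y, y * qshift S.q ℓ y = (∫ y, y * S.q y) - ℓ := by
    rw [integral_mul_qshift (hqc.integrable_of_hasCompactSupport S.hq_supp)
      ((continuous_id.mul hqc).integrable_of_hasCompactSupport S.hq_supp.mul_left), S.hq_int,
      mul_one]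
  constructor
  · intro ℓ φ hφ hwave hA hB
    have h := hφ.integral_mul_neg_of_wave (hkc ℓ) (S.hq_supp.qshift ℓ)
      (fun _ => S.hq_nonneg _) (hk1 ℓ) S.continuous_g S.g_zero S.g_theta
      (fun _ => S.g_lt_self) hwave hA hB S.hθ_mem.1
    linarith [hmean ℓ]
  · intro ℓ φ hφ hwave hA hB
    have h := hφ.integral_mul_pos_of_wave (hkc ℓ) (S.hq_supp.qshift ℓ)
      (fun _ => S.hq_nonneg _) (hk1 ℓ) S.continuous_g S.g_theta S.g_one
      (fun _ => S.self_lt_g) hwave hA hB S.hθ_mem.2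
    linarith [hmean ℓ]
end
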